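/- The two singular points are a sink and a source of index 1: let p₊ = (0,0, ε√(1+ε), 0, …, 0) and p₋ = (0,0, −ε√(1+ε), 0, …, 0). Then for every vector w ∈ ℝ^{2n+1} with w_z = 0 (the tangent space of Σ̃ at p±): (a) the z-component of (fderiv X p±)(w) is 0, so the linearization preserves the tangent hyperplane {w_z = 0}; and (b) ⟨(fderiv X p₊)(w), w⟩ = −ε⁻¹√(1+ε)·‖w‖² and ⟨(fderiv X p₋)(w), w⟩ = +ε⁻¹√(1+ε)·‖w‖². In particular p₊ is a hyperbolic sink and p₋ a hyperbolic source of the characteristic foliation on Σ̃, each of index 1. -/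

import Mathlib

noncomputable section
open scoped BigOperators RealInnerProductSpace

/-- Points of `ℝ^(2n+1)` with the Euclidean structure. -/
abbrev Pt (n : ℕ) : Type := EuclideanSpace ℝ (Fin (2*n+1))

/-- The index of the `u`-coordinate. -/
def idxU (n : ℕ) : Fin (2*n+1) := ⟨0, by omega⟩
/-- The index of the `v`-coordinate (equal to `1` whenever `n ≥ 1`). -/
def idxV (n : ℕ) : Fin (2*n+1) := ⟨1 % (2*n+1), Nat.mod_lt _ (by omega)⟩
/-- The index of the `z`-coordinate (equal to `2` whenever `n ≥ 1`). -/
def idxZ (n : ℕ) : Fin (2*n+1) := ⟨2 % (2*n+1), Nat.mod_lt _ (by omega)⟩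
/-- The index of the `xᵢ`-coordinate, `i = 0, …, n-2`. -/
def idxX {n : ℕ} (i : Fin (n-1)) : Fin (2*n+1) := ⟨3+2*i.val, by have := i.isLt; omega⟩
/-- The index of the `yᵢ`-coordinate, `i = 0, …, n-2`. -/
def idxY {n : ℕ} (i : Fin (n-1)) : Fin (2*n+1) := ⟨4+2*i.val, by have := i.isLt; omega⟩

/-- The `u`-coordinate. -/
def uu {n : ℕ} (p : Pt n) : ℝ := p (idxU n)
/-- The `v`-coordinate. -/
def vv {n : ℕ} (p : Pt n) : ℝ := p (idxV n)
/-- The `z`-coordinate. -/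
def zz {n : ℕ} (p : Pt n) : ℝ := p (idxZ n)
/-- The `xᵢ`-coordinate, `i = 0, …, n-2`. -/
def xx {n : ℕ} (i : Fin (n-1)) (p : Pt n) : ℝ := p (idxX i)
/-- The `yᵢ`-coordinate, `i = 0, …, n-2`. -/
def yy {n : ℕ} (i : Fin (n-1)) (p : Pt n) : ℝ := p (idxY i)
/-- `r² = u² + v²`. -/
def r2 {n : ℕ} (p : Pt n) : ℝ := uu p ^ 2 + vv p ^ 2

/-- `H(p) = u² + v² + ε⁻²(z² + Σᵢ(xᵢ² + yᵢ²))`; the hypersurface `Σ̃` is `{H = 1+ε}`. -/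
def Hfun {n : ℕ} (ε : ℝ) (p : Pt n) : ℝ :=
  r2 p + ε⁻¹ ^ 2 * (zz p ^ 2 + ∑ i : Fin (n-1), (xx i p ^ 2 + yy i p ^ 2))

/-- `u`-component of the vector field `X`. -/
def Xu {n : ℕ} (ε : ℝ) (p : Pt n) : ℝ :=
  ε⁻¹ ^ 2 * (r2 p - 1) * zz p * uu p - (1 + 2*ε - 2 * ε⁻¹ ^ 2 * zz p ^ 2) * vv p
/-- `v`-component of the vector field `X`. -/
def Xv {n : ℕ} (ε : ℝ) (p : Pt n) : ℝ :=
  ε⁻¹ ^ 2 * (r2 p - 1) * zz p * vv p + (1 + 2*ε - 2 * ε⁻¹ ^ 2 * zz p ^ 2) * uu p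
/-- `z`-component of the vector field `X`. -/
def Xz {n : ℕ} (ε : ℝ) (p : Pt n) : ℝ :=
  (r2 p - 1) ^ 2 + (2 * r2 p - 1) * (ε⁻¹ ^ 2 * zz p ^ 2 - ε)
/-- `xᵢ`-component of the vector field `X`. -/
def Xx {n : ℕ} (ε : ℝ) (i : Fin (n-1)) (p : Pt n) : ℝ :=
  ε⁻¹ ^ 2 * (2 * r2 p - 1) * zz p * xx i p - ε⁻¹ ^ 2 * (2 * r2 p ^ 2 - 2 * r2 p + 1) * yy i p
/-- `yᵢ`-component of the vector field `X`. -/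
def Xy {n : ℕ} (ε : ℝ) (i : Fin (n-1)) (p : Pt n) : ℝ :=
  ε⁻¹ ^ 2 * (2 * r2 p - 1) * zz p * yy i p + ε⁻¹ ^ 2 * (2 * r2 p ^ 2 - 2 * r2 p + 1) * xx i p

/-- The vector field `X` of the paper, assembled from its components. -/
def XV {n : ℕ} (ε : ℝ) (p : Pt n) : Pt n :=
  (EuclideanSpace.single (idxU n) (Xu ε p) : Pt n) +
  (EuclideanSpace.single (idxV n) (Xv ε p) : Pt n) +
  (EuclideanSpace.single (idxZ n) (Xz ε p) : Pt n) +
  ∑ i : Fin (n-1),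
    ((EuclideanSpace.single (idxX i) (Xx ε i p) : Pt n) +
     (EuclideanSpace.single (idxY i) (Xy ε i p) : Pt n))

/-- The 1-form `β = (2r²−1)dz + r²(r²−1)dθ + Σᵢ(xᵢ dyᵢ − yᵢ dxᵢ)` evaluated at `p` on `w`. -/
def βval {n : ℕ} (p w : Pt n) : ℝ :=
  (2 * r2 p - 1) * zz w + (r2 p - 1) * (uu p * vv w - vv p * uu w)
    + ∑ i : Fin (n-1), (xx i p * yy i w - yy i p * xx i w)

/-- The 2-form `dβ = 4r dr∧dz + 2r(2r²−1)dr∧dθ + 2Σᵢ dxᵢ∧dyᵢ` evaluated at `p` on `(a, b)`. -/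
def dβval {n : ℕ} (p a b : Pt n) : ℝ :=
  4 * (uu p * uu a + vv p * vv a) * zz b - 4 * (uu p * uu b + vv p * vv b) * zz a
    + 2 * (2 * r2 p - 1) * (uu a * vv b - vv a * uu b)
    + 2 * ∑ i : Fin (n-1), (xx i a * yy i b - yy i a * xx i b)


/-! ### Auxiliary lemmas -/

lemma idxV_val' {n : ℕ} (hn : 1 ≤ n) : (idxV n).val = 1 := by
  simp only [idxV]; exact Nat.mod_eq_of_lt (by omega)
lemma idxZ_val' {n : ℕ} (hn : 1 ≤ n) : (idxZ n).val = 2 := by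
  simp only [idxZ]; exact Nat.mod_eq_of_lt (by omega)

lemma pair_sum (m : ℕ) (h : ℕ → ℝ) :
    ∑ k ∈ Finset.range (2*m), h k = ∑ i ∈ Finset.range m, (h (2*i) + h (2*i+1)) := by
  induction m with
  | zero => simp
  | succ m ih =>
      have : 2*(m+1) = (2*m) + 1 + 1 := by omega
      rw [this, Finset.sum_range_succ, Finset.sum_range_succ, ih, Finset.sum_range_succ]
      ring

lemma fin_sum_split {n : ℕ} (hn : 1 ≤ n) (f : Fin (2*n+1) → ℝ) :
    ∑ j, f j = f (idxU n) + f (idxV n) + f (idxZ n)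
      + ∑ i : Fin (n-1), (f (idxX i) + f (idxY i)) := by
  classical
  set F : ℕ → ℝ := fun k => if h : k < 2*n+1 then f ⟨k, h⟩ else 0 with hF
  have h1 : ∑ j, f j = ∑ k ∈ Finset.range (2*n+1), F k := by
    rw [← Fin.sum_univ_eq_sum_range]
    exact Finset.sum_congr rfl fun j _ => by simp [hF, j.isLt]; intro h; exact absurd j.isLt (by omega)
  have h2 : (2*n+1 : ℕ) = 3 + 2*(n-1) := by omega
  rw [h1, h2, Finset.sum_range_add]
  have h3 : ∑ k ∈ Finset.range 3, F k = f (idxU n) + f (idxV n) + f (idxZ n) := by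
    rw [Finset.sum_range_succ, Finset.sum_range_succ, Finset.sum_range_one]
    have e0 : F 0 = f (idxU n) := by
      show (if h : (0:ℕ) < 2*n+1 then f ⟨0, h⟩ else 0) = f (idxU n)
      rw [dif_pos (by omega : (0:ℕ) < 2*n+1)]; rfl
    have e1 : F 1 = f (idxV n) := by
      show (if h : (1:ℕ) < 2*n+1 then f ⟨1, h⟩ else 0) = f (idxV n)
      rw [dif_pos (by omega : (1:ℕ) < 2*n+1)]; congr 1
      exact Fin.ext (by rw [idxV_val' hn])
    have e2 : F 2 = f (idxZ n) := by
      show (if h : (2:ℕ) < 2*n+1 then f ⟨2, h⟩ else 0) = f (idxZ n)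
      rw [dif_pos (by omega : (2:ℕ) < 2*n+1)]; congr 1
      exact Fin.ext (by rw [idxZ_val' hn])
    rw [e0, e1, e2]
  rw [h3]
  congr 1
  rw [pair_sum]
  rw [← Fin.sum_univ_eq_sum_range (fun k => F (3 + 2*k) + F (3 + (2*k+1)))]
  refine Finset.sum_congr rfl fun i _ => ?_
  have hx : (3 + 2*(i:ℕ)) < 2*n+1 := by have := i.isLt; omega
  have hy : (3 + (2*(i:ℕ)+1)) < 2*n+1 := by have := i.isLt; omega
  show (if h : _ then f ⟨3 + 2*(i:ℕ), h⟩ else 0) + (if h : _ then f ⟨3 + (2*(i:ℕ)+1), h⟩ else 0)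
      = f (idxX i) + f (idxY i)
  rw [dif_pos hx, dif_pos hy]
  congr 1
  congr 1
  exact Fin.ext (by simp [idxY]; omega)

/-- `EuclideanSpace.single j` as a continuous linear map in the value. -/
def sCLM (n : ℕ) (j : Fin (2*n+1)) : ℝ →L[ℝ] Pt n :=
  LinearMap.toContinuousLinearMap
    { toFun := fun r => EuclideanSpace.single j r
      map_add' := fun a b => by
        ext k; by_cases h : k = j <;> simp [EuclideanSpace.single_apply, h]
      map_smul' := fun a b => by
        ext k; by_cases h : k = j <;> simp [EuclideanSpace.single_apply, h] }

@[simp] lemma sCLM_apply (n : ℕ) (j : Fin (2*n+1)) (r : ℝ) :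
    sCLM n j r = EuclideanSpace.single j r := rfl

/-- The linearization of `X` at the singular points `(0,0,c,0,…,0)`. -/
def Dmap (n : ℕ) (ε c : ℝ) : Pt n →L[ℝ] Pt n :=
  (sCLM n (idxU n)).comp
      ((-(ε⁻¹^2*c)) • (EuclideanSpace.proj (idxU n) : Pt n →L[ℝ] ℝ)
        + (EuclideanSpace.proj (idxV n) : Pt n →L[ℝ] ℝ))
  + (sCLM n (idxV n)).comp
      ((-(ε⁻¹^2*c)) • (EuclideanSpace.proj (idxV n) : Pt n →L[ℝ] ℝ)
        - (EuclideanSpace.proj (idxU n) : Pt n →L[ℝ] ℝ))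
  + (sCLM n (idxZ n)).comp
      ((-(2*(ε⁻¹^2*c))) • (EuclideanSpace.proj (idxZ n) : Pt n →L[ℝ] ℝ))
  + ∑ i : Fin (n-1),
      ((sCLM n (idxX i)).comp
          ((-(ε⁻¹^2*c)) • (EuclideanSpace.proj (idxX i) : Pt n →L[ℝ] ℝ)
            - (ε⁻¹^2) • (EuclideanSpace.proj (idxY i) : Pt n →L[ℝ] ℝ))
       + (sCLM n (idxY i)).comp
          ((-(ε⁻¹^2*c)) • (EuclideanSpace.proj (idxY i) : Pt n →L[ℝ] ℝ)
            + (ε⁻¹^2) • (EuclideanSpace.proj (idxX i) : Pt n →L[ℝ] ℝ)))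

set_option maxHeartbeats 1000000 in
lemma keyD {n : ℕ} (hn : 2 ≤ n) (ε c : ℝ) (hc : ε⁻¹^2 * c^2 = 1 + ε) :
    HasFDerivAt (XV ε) (Dmap n ε c) (EuclideanSpace.single (idxZ n) c : Pt n) := by
  set p : Pt n := (EuclideanSpace.single (idxZ n) c : Pt n) with hp
  have hn1 : 1 ≤ n := by omega
  have hu : p (idxU n) = 0 := by
    rw [hp, EuclideanSpace.single_apply, if_neg]
    intro h
    have := congrArg Fin.val h
    rw [idxZ_val' hn1] at this
    simp [idxU] at this
  have hv : p (idxV n) = 0 := by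
    rw [hp, EuclideanSpace.single_apply, if_neg]
    intro h
    have := congrArg Fin.val h
    rw [idxZ_val' hn1, idxV_val' hn1] at this
    omega
  have hz : p (idxZ n) = c := by
    rw [hp, EuclideanSpace.single_apply, if_pos rfl]
  have hx : ∀ i : Fin (n-1), p (idxX i) = 0 := by
    intro i
    rw [hp, EuclideanSpace.single_apply, if_neg]
    intro h
    have := congrArg Fin.val h
    rw [idxZ_val' hn1] at this
    simp only [idxX] at this
    omega
  have hy : ∀ i : Fin (n-1), p (idxY i) = 0 := by
    intro i
    rw [hp, EuclideanSpace.single_apply, if_neg]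
    intro h
    have := congrArg Fin.val h
    rw [idxZ_val' hn1] at this
    simp only [idxY] at this
    omega
  have hU : HasFDerivAt (fun q : Pt n => q (idxU n))
      (EuclideanSpace.proj (idxU n) : Pt n →L[ℝ] ℝ) p :=
    (EuclideanSpace.proj (idxU n) : Pt n →L[ℝ] ℝ).hasFDerivAt
  have hV : HasFDerivAt (fun q : Pt n => q (idxV n))
      (EuclideanSpace.proj (idxV n) : Pt n →L[ℝ] ℝ) p :=
    (EuclideanSpace.proj (idxV n) : Pt n →L[ℝ] ℝ).hasFDerivAt
  have hZ : HasFDerivAt (fun q : Pt n => q (idxZ n))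
      (EuclideanSpace.proj (idxZ n) : Pt n →L[ℝ] ℝ) p :=
    (EuclideanSpace.proj (idxZ n) : Pt n →L[ℝ] ℝ).hasFDerivAt
  have hX : ∀ i : Fin (n-1), HasFDerivAt (fun q : Pt n => q (idxX i))
      (EuclideanSpace.proj (idxX i) : Pt n →L[ℝ] ℝ) p :=
    fun i => (EuclideanSpace.proj (idxX i) : Pt n →L[ℝ] ℝ).hasFDerivAt
  have hY : ∀ i : Fin (n-1), HasFDerivAt (fun q : Pt n => q (idxY i))
      (EuclideanSpace.proj (idxY i) : Pt n →L[ℝ] ℝ) p :=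
    fun i => (EuclideanSpace.proj (idxY i) : Pt n →L[ℝ] ℝ).hasFDerivAt
  have hr2 := ((hasDerivAt_pow 2 (p (idxU n))).comp_hasFDerivAt p hU).add
    ((hasDerivAt_pow 2 (p (idxV n))).comp_hasFDerivAt p hV)
  -- u-component
  have hXu : HasFDerivAt (Xu (n := n) ε)
      ((-(ε⁻¹^2*c)) • (EuclideanSpace.proj (idxU n) : Pt n →L[ℝ] ℝ)
        + (EuclideanSpace.proj (idxV n) : Pt n →L[ℝ] ℝ)) p := by
    have h : HasFDerivAt (Xu (n := n) ε) _ p :=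
      ((((hr2.sub_const 1).const_mul (ε⁻¹^2)).mul hZ).mul hU).sub
        (((((hasDerivAt_pow 2 (p (idxZ n))).comp_hasFDerivAt p hZ).const_mul (2*ε⁻¹^2)).const_sub (1+2*ε)).mul hV)
    refine h.congr_fderiv ?_
    ext w
    simp only [ContinuousLinearMap.add_apply, ContinuousLinearMap.sub_apply,
      ContinuousLinearMap.smul_apply, ContinuousLinearMap.coe_smul', ContinuousLinearMap.coe_sub',
      Pi.smul_apply, Pi.sub_apply, smul_eq_mul, PiLp.proj_apply, Function.comp_apply,
      uu, vv, zz, xx, yy, hu, hv, hz, pow_one]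
    norm_num
    simp only [hu, hv, hz]
    linear_combination (2 : ℝ) * w (idxV n) * hc
  -- v-component
  have hXv : HasFDerivAt (Xv (n := n) ε)
      ((-(ε⁻¹^2*c)) • (EuclideanSpace.proj (idxV n) : Pt n →L[ℝ] ℝ)
        - (EuclideanSpace.proj (idxU n) : Pt n →L[ℝ] ℝ)) p := by
    have h : HasFDerivAt (Xv (n := n) ε) _ p :=
      ((((hr2.sub_const 1).const_mul (ε⁻¹^2)).mul hZ).mul hV).add
        (((((hasDerivAt_pow 2 (p (idxZ n))).comp_hasFDerivAt p hZ).const_mul (2*ε⁻¹^2)).const_sub (1+2*ε)).mul hU)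
    refine h.congr_fderiv ?_
    ext w
    simp only [ContinuousLinearMap.add_apply, ContinuousLinearMap.sub_apply,
      ContinuousLinearMap.smul_apply, ContinuousLinearMap.coe_smul', ContinuousLinearMap.coe_sub',
      Pi.smul_apply, Pi.sub_apply, smul_eq_mul, PiLp.proj_apply, Function.comp_apply,
      uu, vv, zz, xx, yy, hu, hv, hz, pow_one]
    norm_num
    simp only [hu, hv, hz]
    linear_combination (-2 : ℝ) * w (idxU n) * hc
  -- z-component
  have hXz : HasFDerivAt (Xz (n := n) ε)
      ((-(2*(ε⁻¹^2*c))) • (EuclideanSpace.proj (idxZ n) : Pt n →L[ℝ] ℝ)) p := by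
    have h : HasFDerivAt (Xz (n := n) ε) _ p :=
      ((hasDerivAt_pow 2 _).comp_hasFDerivAt p (hr2.sub_const 1)).add
        (((hr2.const_mul 2).sub_const 1).mul ((((hasDerivAt_pow 2 (p (idxZ n))).comp_hasFDerivAt p hZ).const_mul (ε⁻¹^2)).sub_const ε))
    refine h.congr_fderiv ?_
    ext w
    simp only [ContinuousLinearMap.add_apply, ContinuousLinearMap.sub_apply,
      ContinuousLinearMap.smul_apply, ContinuousLinearMap.coe_smul', ContinuousLinearMap.coe_sub',
      Pi.smul_apply, Pi.sub_apply, smul_eq_mul, PiLp.proj_apply, Function.comp_apply,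
      uu, vv, zz, xx, yy, hu, hv, hz, pow_one]
    norm_num
    simp only [hu, hv, hz]
    all_goals ring
  -- x,y-components
  have hXx : ∀ i : Fin (n-1), HasFDerivAt (Xx (n := n) ε i)
      ((-(ε⁻¹^2*c)) • (EuclideanSpace.proj (idxX i) : Pt n →L[ℝ] ℝ)
        - (ε⁻¹^2) • (EuclideanSpace.proj (idxY i) : Pt n →L[ℝ] ℝ)) p := by
    intro i
    have h : HasFDerivAt (Xx (n := n) ε i) _ p :=
      (((((hr2.const_mul 2).sub_const 1).const_mul (ε⁻¹^2)).mul hZ).mul (hX i)).sub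
        (((((((hasDerivAt_pow 2 (p (idxU n)^2 + p (idxV n)^2)).comp_hasFDerivAt p hr2).const_mul 2).sub (hr2.const_mul 2)).add_const 1).const_mul
            (ε⁻¹^2)).mul (hY i))
    refine h.congr_fderiv ?_
    ext w
    simp only [ContinuousLinearMap.add_apply, ContinuousLinearMap.sub_apply,
      ContinuousLinearMap.smul_apply, ContinuousLinearMap.coe_smul', ContinuousLinearMap.coe_sub',
      Pi.smul_apply, Pi.sub_apply, smul_eq_mul, PiLp.proj_apply, Function.comp_apply,
      uu, vv, zz, xx, yy, hu, hv, hz, hx i, hy i, pow_one]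
    norm_num
    simp only [hu, hv, hz, hx i, hy i]
    all_goals ring
  have hXy : ∀ i : Fin (n-1), HasFDerivAt (Xy (n := n) ε i)
      ((-(ε⁻¹^2*c)) • (EuclideanSpace.proj (idxY i) : Pt n →L[ℝ] ℝ)
        + (ε⁻¹^2) • (EuclideanSpace.proj (idxX i) : Pt n →L[ℝ] ℝ)) p := by
    intro i
    have h : HasFDerivAt (Xy (n := n) ε i) _ p :=
      (((((hr2.const_mul 2).sub_const 1).const_mul (ε⁻¹^2)).mul hZ).mul (hY i)).add
        (((((((hasDerivAt_pow 2 (p (idxU n)^2 + p (idxV n)^2)).comp_hasFDerivAt p hr2).const_mul 2).sub (hr2.const_mul 2)).add_const 1).const_mul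
            (ε⁻¹^2)).mul (hX i))
    refine h.congr_fderiv ?_
    ext w
    simp only [ContinuousLinearMap.add_apply, ContinuousLinearMap.sub_apply,
      ContinuousLinearMap.smul_apply, ContinuousLinearMap.coe_smul', ContinuousLinearMap.coe_sub',
      Pi.smul_apply, Pi.sub_apply, smul_eq_mul, PiLp.proj_apply, Function.comp_apply,
      uu, vv, zz, xx, yy, hu, hv, hz, hx i, hy i, pow_one]
    norm_num
    simp only [hu, hv, hz, hx i, hy i]
    all_goals ring
  -- assemble
  have hA := (sCLM n (idxU n)).hasFDerivAt.comp p hXu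
  have hB := (sCLM n (idxV n)).hasFDerivAt.comp p hXv
  have hC := (sCLM n (idxZ n)).hasFDerivAt.comp p hXz
  have hsum : HasFDerivAt
      (fun q : Pt n => ∑ i : Fin (n-1),
        ((EuclideanSpace.single (idxX i) (Xx ε i q) : Pt n) +
         (EuclideanSpace.single (idxY i) (Xy ε i q) : Pt n)))
      (∑ i : Fin (n-1),
        ((sCLM n (idxX i)).comp
            ((-(ε⁻¹^2*c)) • (EuclideanSpace.proj (idxX i) : Pt n →L[ℝ] ℝ)
              - (ε⁻¹^2) • (EuclideanSpace.proj (idxY i) : Pt n →L[ℝ] ℝ))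
         + (sCLM n (idxY i)).comp
            ((-(ε⁻¹^2*c)) • (EuclideanSpace.proj (idxY i) : Pt n →L[ℝ] ℝ)
              + (ε⁻¹^2) • (EuclideanSpace.proj (idxX i) : Pt n →L[ℝ] ℝ)))) p :=
    HasFDerivAt.fun_sum (fun i _ =>
      ((sCLM n (idxX i)).hasFDerivAt.comp p (hXx i)).add
        ((sCLM n (idxY i)).hasFDerivAt.comp p (hXy i)))
  exact ((hA.add hB).add hC).add hsum

lemma main_calc {n : ℕ} (hn : 2 ≤ n) (ε c : ℝ) (hε : 0 < ε) (w : Pt n)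
    (hw : w (idxZ n) = 0) :
    zz (Dmap n ε c w) = 0 ∧
    (inner ℝ (Dmap n ε c w) w : ℝ) = -(ε⁻¹^2*c) * ‖w‖^2 := by
  have hn1 : 1 ≤ n := by omega
  have hZU : idxZ n ≠ idxU n := by
    intro h; have := congrArg Fin.val h; rw [idxZ_val' hn1] at this; simp [idxU] at this
  have hZV : idxZ n ≠ idxV n := by
    intro h; have := congrArg Fin.val h; rw [idxZ_val' hn1, idxV_val' hn1] at this; omega
  have hZX : ∀ i : Fin (n-1), idxZ n ≠ idxX i := by
    intro i h; have := congrArg Fin.val h; rw [idxZ_val' hn1] at this; simp only [idxX] at this; omega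
  have hZY : ∀ i : Fin (n-1), idxZ n ≠ idxY i := by
    intro i h; have := congrArg Fin.val h; rw [idxZ_val' hn1] at this; simp only [idxY] at this; omega
  have hzz : ∀ v : Pt n, zz v = (EuclideanSpace.proj (idxZ n) : Pt n →L[ℝ] ℝ) v :=
    fun v => rfl
  constructor
  · rw [hzz]
    simp [Dmap, map_add, map_sum, EuclideanSpace.single_apply, hZU, hZV, hZX, hZY, hw]
  · have hns : ‖w‖^2 = ∑ j, w j * w j := by
      rw [← real_inner_self_eq_norm_sq, PiLp.inner_apply]
      simp [RCLike.inner_apply, starRingEnd_apply]; simp only [sq]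
    rw [hns, fin_sum_split hn1 (fun j => w j * w j)]
    simp only [Dmap, ContinuousLinearMap.add_apply, ContinuousLinearMap.comp_apply,
      ContinuousLinearMap.sum_apply, ContinuousLinearMap.coe_sub', ContinuousLinearMap.coe_smul',
      Pi.sub_apply, Pi.smul_apply, ContinuousLinearMap.sub_apply, ContinuousLinearMap.smul_apply,
      sCLM_apply, PiLp.proj_apply, smul_eq_mul]
    rw [inner_add_left, inner_add_left, inner_add_left, sum_inner]
    simp only [inner_add_left, EuclideanSpace.inner_single_left, starRingEnd_apply, star_trivial]
    rw [hw]
    rw [show ∑ x : Fin (n-1),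
        ((-(ε⁻¹^2*c) * w (idxX x) - ε⁻¹^2 * w (idxY x)) * w (idxX x) +
          (-(ε⁻¹^2*c) * w (idxY x) + ε⁻¹^2 * w (idxX x)) * w (idxY x))
        = ∑ x : Fin (n-1), -(ε⁻¹^2*c) * (w (idxX x) * w (idxX x) + w (idxY x) * w (idxY x))
      from Finset.sum_congr rfl fun i _ => by ring]
    rw [← Finset.mul_sum]
    ring

/-- The two singular points `p± = (0,0,±ε√(1+ε),0,…,0)` are a sink and a source
of index 1: for every `w` with `w_z = 0`, (a) the `z`-component of `(fderiv X p±)(w)` vanishes,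
and (b) `⟨(fderiv X p₊)(w), w⟩ = −ε⁻¹√(1+ε)·‖w‖²` and `⟨(fderiv X p₋)(w), w⟩ = +ε⁻¹√(1+ε)·‖w‖²`. -/
theorem stmt11 (n : ℕ) (hn : 2 ≤ n) (ε : ℝ) (hε : 0 < ε)
    (pP pM : Pt n)
    (hP : pP = (EuclideanSpace.single (idxZ n) (ε * Real.sqrt (1+ε)) : Pt n))
    (hM : pM = (EuclideanSpace.single (idxZ n) (-(ε * Real.sqrt (1+ε))) : Pt n)) :
    ∀ w : Pt n, zz w = 0 →
      (zz (fderiv ℝ (XV ε : Pt n → Pt n) pP w) = 0 ∧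
       zz (fderiv ℝ (XV ε : Pt n → Pt n) pM w) = 0) ∧
      (inner ℝ (fderiv ℝ (XV ε : Pt n → Pt n) pP w) w : ℝ)
        = -(ε⁻¹ * Real.sqrt (1+ε)) * ‖w‖ ^ 2 ∧
      (inner ℝ (fderiv ℝ (XV ε : Pt n → Pt n) pM w) w : ℝ)
        = (ε⁻¹ * Real.sqrt (1+ε)) * ‖w‖ ^ 2 := by
  
  intro w hw
  have hε' : ε ≠ 0 := ne_of_gt hε
  have hsq : Real.sqrt (1+ε) ^ 2 = 1 + ε := Real.sq_sqrt (by linarith)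
  have hcP : ε⁻¹^2 * (ε * Real.sqrt (1+ε))^2 = 1 + ε := by
    have h1 : ε⁻¹^2 * (ε * Real.sqrt (1+ε))^2 = (ε⁻¹*ε)^2 * Real.sqrt (1+ε)^2 := by ring
    rw [h1, inv_mul_cancel₀ hε', one_pow, one_mul, hsq]
  have hcM : ε⁻¹^2 * (-(ε * Real.sqrt (1+ε)))^2 = 1 + ε := by rw [neg_pow]; simpa using hcP
  have hDP := keyD hn ε (ε * Real.sqrt (1+ε)) hcP
  have hDM := keyD hn ε (-(ε * Real.sqrt (1+ε))) hcM
  have hw' : w (idxZ n) = 0 := hw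
  obtain ⟨z1, i1⟩ := main_calc hn ε (ε * Real.sqrt (1+ε)) hε w hw'
  obtain ⟨z2, i2⟩ := main_calc hn ε (-(ε * Real.sqrt (1+ε))) hε w hw'
  have hco : ε⁻¹^2 * (ε * Real.sqrt (1+ε)) = ε⁻¹ * Real.sqrt (1+ε) := by
    field_simp
  rw [hP, hM, hDP.fderiv, hDM.fderiv]
  refine ⟨⟨z1, z2⟩, ?_, ?_⟩
  · rw [i1, hco]
  · rw [i2, show -(ε⁻¹^2 * (-(ε * Real.sqrt (1+ε)))) = ε⁻¹ * Real.sqrt (1+ε) from by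
      rw [← hco]; ring]
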